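/- arXiv:2011.07708 — 3 statements merged into one kernel-verified Lean document; each statement's English description precedes it below -/
import Mathlib

section
/- Let ν ∈ Z_5 be the square root of -1 congruent to 2 mod 5. The image in GL_2(F_5) (via reduction mod 5 of the embedding 1↦I, i↦(0 1;-1 0), j↦(ν 0;0 -ν), k↦(0 -ν;-ν 0)) of the 24-element Hurwitz unit group intersects the subgroup B = {(a b; 0 1)} trivially (only in the identity). -/
open Matrix

instance : Fact (Nat.Prime 5) := ⟨by norm_num⟩

/-- Coordinates (a,b,c,d) of the 24 Hurwitz units, viewed inside `ℤ_[5]` (note `1/2 ∈ ℤ_[5]`):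
the eight units `±1, ±i, ±j, ±k` and the sixteen `(±1 ± i ± j ± k)/2`. -/
def hurwitzUnitCoords : Set (ℤ_[5] × ℤ_[5] × ℤ_[5] × ℤ_[5]) :=
  {p | p ∈ ({(1,0,0,0), (-1,0,0,0), (0,1,0,0), (0,-1,0,0),
              (0,0,1,0), (0,0,-1,0), (0,0,0,1), (0,0,0,-1)} :
        Set (ℤ_[5] × ℤ_[5] × ℤ_[5] × ℤ_[5])) ∨
    ((2 * p.1 = 1 ∨ 2 * p.1 = -1) ∧ (2 * p.2.1 = 1 ∨ 2 * p.2.1 = -1) ∧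
     (2 * p.2.2.1 = 1 ∨ 2 * p.2.2.1 = -1) ∧ (2 * p.2.2.2 = 1 ∨ 2 * p.2.2.2 = -1))}

/-- The embedding of a quaternion `a + bi + cj + dk` into `M₂(ℤ₅)` determined by
`1 ↦ I`, `i ↦ (0 1; -1 0)`, `j ↦ (ν 0; 0 -ν)`, `k ↦ (0 -ν; -ν 0)`. -/
noncomputable def quatEmbed (ν : ℤ_[5]) (p : ℤ_[5] × ℤ_[5] × ℤ_[5] × ℤ_[5]) :
    Matrix (Fin 2) (Fin 2) ℤ_[5] :=
  p.1 • (1 : Matrix (Fin 2) (Fin 2) ℤ_[5]) + p.2.1 • !![0, 1; -1, 0] +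
    p.2.2.1 • !![ν, 0; 0, -ν] + p.2.2.2 • !![0, -ν; -ν, 0]

/-- Reduction of a matrix over `ℤ₅` modulo 5. -/
noncomputable def reduceMod5 (m : Matrix (Fin 2) (Fin 2) ℤ_[5]) : Matrix (Fin 2) (Fin 2) (ZMod 5) :=
  m.map PadicInt.toZMod

/-- The subgroup `B = {(a b; 0 1) : a ∈ F₅ˣ, b ∈ F₅}`, as a set of matrices. -/
def borelSet : Set (Matrix (Fin 2) (Fin 2) (ZMod 5)) :=
  {m | ∃ a b : ZMod 5, a ≠ 0 ∧ m = !![a, b; 0, 1]}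

/-! Reducing modulo 5 sends `ν` to `2` and the quaternion `a + bi + cj + dk` to
`(a + 2c, b - 2d; -b - 2d, a - 2c)`. Membership in `B` forces `b = -2d` and `a - 2c = 1`. For the
sixteen half-integral units `b, d ≡ ±1/2 = ∓2 (mod 5)`, and then `b ≠ -2d`; among `±1, ±i, ±j, ±k`
only `1` satisfies both conditions. -/

lemma reduceMod5_quatEmbed (ν : ℤ_[5]) (p : ℤ_[5] × ℤ_[5] × ℤ_[5] × ℤ_[5]) :
    reduceMod5 (quatEmbed ν p) =
      !![p.1.toZMod + ν.toZMod * p.2.2.1.toZMod, p.2.1.toZMod - ν.toZMod * p.2.2.2.toZMod;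
         -p.2.1.toZMod - ν.toZMod * p.2.2.2.toZMod, p.1.toZMod - ν.toZMod * p.2.2.1.toZMod] := by
  ext i j
  fin_cases i <;> fin_cases j <;>
    simp [reduceMod5, quatEmbed, mul_comm, sub_eq_add_neg]

lemma lower_row_of_mem_borelSet {x y z w : ZMod 5} (h : !![x, y; z, w] ∈ borelSet) :
    z = 0 ∧ w = 1 := by
  obtain ⟨a, b, -, hab⟩ := h
  exact ⟨by simpa using congrFun (congrFun hab 1) 0, by simpa using congrFun (congrFun hab 1) 1⟩

lemma toZMod_eq_two_or_neg_two_of_two_mul {x : ℤ_[5]} (h : 2 * x = 1 ∨ 2 * x = -1) :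
    x.toZMod = 2 ∨ x.toZMod = -2 := by
  have halves_mod_five : ∀ y : ZMod 5, 2 * y = 1 ∨ 2 * y = -1 → y = 2 ∨ y = -2 := by decide
  apply halves_mod_five
  rcases h with h | h
  · left; simpa [map_ofNat] using congrArg PadicInt.toZMod h
  · right; simpa [map_ofNat] using congrArg PadicInt.toZMod h

lemma neg_sub_two_mul_ne_zero {b d : ZMod 5} (hb : b = 2 ∨ b = -2) (hd : d = 2 ∨ d = -2) :
    -b - 2 * d ≠ 0 := by
  rcases hb with rfl | rfl <;> rcases hd with rfl | rfl <;> decide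

theorem hurwitz_units_meet_borel_trivially_general
    (ν : ℤ_[5]) (hν2 : PadicInt.toZMod ν = 2) :
    ∀ p ∈ hurwitzUnitCoords, reduceMod5 (quatEmbed ν p) ∈ borelSet →
      reduceMod5 (quatEmbed ν p) = 1 := by
  intro p hp hB
  rw [reduceMod5_quatEmbed, hν2] at hB ⊢
  obtain ⟨hlow, hdiag⟩ := lower_row_of_mem_borelSet hB
  rcases hp with hunit | ⟨-, hb, -, hd⟩
  · simp only [Set.mem_insert_iff, Set.mem_singleton_iff] at hunit
    rcases hunit with rfl | rfl | rfl | rfl | rfl | rfl | rfl | rfl <;>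
      simp [Matrix.one_fin_two] at hlow hdiag ⊢ <;> exact absurd hdiag (by decide)
  · exact absurd hlow (neg_sub_two_mul_ne_zero (toZMod_eq_two_or_neg_two_of_two_mul hb)
      (toZMod_eq_two_or_neg_two_of_two_mul hd))

/-- The image in `GL₂(F₅)` of the 24-element Hurwitz unit group, via reduction mod 5 of the
embedding determined by the square root `ν` of `-1` with `ν ≡ 2 (mod 5)`, meets
`B = {(a b; 0 1)}` only in the identity. -/
theorem hurwitz_units_meet_borel_trivially
    (ν : ℤ_[5]) (hν : ν ^ 2 = -1) (hν2 : PadicInt.toZMod ν = 2) :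
    ∀ p ∈ hurwitzUnitCoords, reduceMod5 (quatEmbed ν p) ∈ borelSet →
      reduceMod5 (quatEmbed ν p) = 1 :=
  hurwitz_units_meet_borel_trivially_general ν hν2
end

section
/- With notation as above, the image of the Hurwitz unit group O_D^× in GL_2(F_5) forms a complete set of coset representatives for GL_2(F_5)/B, where B = {(a b; 0 1) : a ∈ F_5^×, b ∈ F_5}; i.e., GL_2(F_5) is the disjoint union over u ∈ O_D^× of the cosets uB. -/
open Matrix

/-!
If `det u = 1`, then `g ∈ uB` exactly when the first column of `u` is the first column of `g`
divided by `det g`: `B` is the stabiliser of the row vector `(0, 1)`, so `uB` is determined by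
the bottom row of `u⁻¹`. Reduction mod 5 sends a Hurwitz unit `a + bi + cj + dk` to a matrix of
determinant `a² + b² + c² + d² = 1`, since `ν ≡ 2` and `2² = -1` in `F₅`. What remains is a
finite fact: the first columns of the 24 reduced units are the 24 nonzero vectors of `F₅²`,
each exactly once.
-/

variable {R S : Type*}

section Coordinates

variable [Ring R] [Ring S]

def IsSignedHalf (x : R) : Prop := 2 * x = 1 ∨ 2 * x = -1

variable (R) in
def signedBasis : Set (R × R × R × R) :=
  {(1,0,0,0), (-1,0,0,0), (0,1,0,0), (0,-1,0,0), (0,0,1,0), (0,0,-1,0), (0,0,0,1), (0,0,0,-1)}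

def IsHurwitzUnitCoords (p : R × R × R × R) : Prop :=
  p ∈ signedBasis R ∨
    (IsSignedHalf p.1 ∧ IsSignedHalf p.2.1 ∧ IsSignedHalf p.2.2.1 ∧ IsSignedHalf p.2.2.2)

def mapCoords (f : R →+* S) (p : R × R × R × R) : S × S × S × S :=
  (f p.1, f p.2.1, f p.2.2.1, f p.2.2.2)

theorem image_mapCoords_signedBasis (f : R →+* S) :
    mapCoords f '' signedBasis R = signedBasis S := by
  simp [signedBasis, Set.image_insert_eq, mapCoords]

theorem IsSignedHalf.map (f : R →+* S) {x : R} (hx : IsSignedHalf x) : IsSignedHalf (f x) := by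
  rcases hx with h | h
  · left; simpa [map_ofNat] using congrArg f h
  · right; simpa [map_ofNat] using congrArg f h

theorem IsSignedHalf.exists_map_eq (f : R →+* S) (h2 : IsUnit (2 : R)) {y : S}
    (hy : IsSignedHalf y) : ∃ x, IsSignedHalf x ∧ f x = y := by
  obtain ⟨h, hh⟩ := h2.exists_right_inv
  have hinv : f h * 2 = 1 := by
    rw [← map_ofNat f 2, ← map_mul, ← (Commute.ofNat_left 2 h).eq, hh, map_one]
  rcases hy with hy | hy
  · refine ⟨h, Or.inl hh, ?_⟩
    calc f h = f h * (2 * y) := by rw [hy, mul_one]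
      _ = y := by rw [← mul_assoc, hinv, one_mul]
  · refine ⟨-h, Or.inr (by rw [mul_neg, hh]), ?_⟩
    calc f (-h) = f h * (2 * y) := by rw [hy, map_neg, mul_neg_one]
      _ = y := by rw [← mul_assoc, hinv, one_mul]

theorem IsHurwitzUnitCoords.map (f : R →+* S) {p : R × R × R × R} (hp : IsHurwitzUnitCoords p) :
    IsHurwitzUnitCoords (mapCoords f p) := by
  rcases hp with hp | ⟨h1, h2, h3, h4⟩
  · exact Or.inl (image_mapCoords_signedBasis f ▸ Set.mem_image_of_mem _ hp)
  · exact Or.inr ⟨h1.map f, h2.map f, h3.map f, h4.map f⟩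

theorem IsHurwitzUnitCoords.exists_map_eq (f : R →+* S) (h2 : IsUnit (2 : R))
    {q : S × S × S × S} (hq : IsHurwitzUnitCoords q) :
    ∃ p, IsHurwitzUnitCoords p ∧ mapCoords f p = q := by
  rcases hq with hq | ⟨h1, h2', h3, h4⟩
  · obtain ⟨p, hp, rfl⟩ := (image_mapCoords_signedBasis f).symm ▸ hq
    exact ⟨p, Or.inl hp, rfl⟩
  · obtain ⟨q1, q2, q3, q4⟩ := q
    obtain ⟨x1, hx1, rfl⟩ := h1.exists_map_eq f h2
    obtain ⟨x2, hx2, rfl⟩ := h2'.exists_map_eq f h2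
    obtain ⟨x3, hx3, rfl⟩ := h3.exists_map_eq f h2
    obtain ⟨x4, hx4, rfl⟩ := h4.exists_map_eq f h2
    exact ⟨(x1, x2, x3, x4), Or.inr ⟨hx1, hx2, hx3, hx4⟩, rfl⟩

end Coordinates

section QuaternionMatrix

variable [CommRing R] [CommRing S]

def quatMat (ν : R) (p : R × R × R × R) : Matrix (Fin 2) (Fin 2) R :=
  !![p.1 + ν * p.2.2.1, p.2.1 - ν * p.2.2.2; -p.2.1 - ν * p.2.2.2, p.1 - ν * p.2.2.1]

theorem map_quatMat (f : R →+* S) (ν : R) (p : R × R × R × R) :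
    (quatMat ν p).map f = quatMat (f ν) (mapCoords f p) := by
  ext i j
  fin_cases i <;> fin_cases j <;> simp [quatMat, mapCoords]

theorem det_quatMat {ν : R} (hν : ν ^ 2 = -1) (p : R × R × R × R) :
    (quatMat ν p).det = p.1 ^ 2 + p.2.1 ^ 2 + p.2.2.1 ^ 2 + p.2.2.2 ^ 2 := by
  rw [quatMat, det_fin_two_of]
  linear_combination (-(p.2.2.1 ^ 2 + p.2.2.2 ^ 2)) * hν

theorem IsSignedHalf.two_mul_sq {x : R} (hx : IsSignedHalf x) : (2 * x) ^ 2 = 1 := by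
  rcases hx with h | h <;> rw [h] <;> norm_num

theorem IsHurwitzUnitCoords.sum_sq_eq_one (h2 : IsUnit (2 : R)) {p : R × R × R × R}
    (hp : IsHurwitzUnitCoords p) : p.1 ^ 2 + p.2.1 ^ 2 + p.2.2.1 ^ 2 + p.2.2.2 ^ 2 = 1 := by
  rcases hp with hp | ⟨h1, h2', h3, h4⟩
  · simp only [signedBasis, Set.mem_insert_iff, Set.mem_singleton_iff] at hp
    rcases hp with rfl | rfl | rfl | rfl | rfl | rfl | rfl | rfl <;> norm_num
  · apply (h2.mul h2).mul_left_cancel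
    linear_combination h1.two_mul_sq + h2'.two_mul_sq + h3.two_mul_sq + h4.two_mul_sq

end QuaternionMatrix

theorem exists_eq_mul_upperTriangular_iff {K : Type*} [Field K]
    {u g : Matrix (Fin 2) (Fin 2) K} (hu : u.det = 1) (hg : g.det ≠ 0) :
    (∃ a b : K, a ≠ 0 ∧ g = u * !![a, b; 0, 1]) ↔
      (u 0 0, u 1 0) = (g 0 0 / g.det, g 1 0 / g.det) := by
  constructor
  · rintro ⟨a, b, ha, rfl⟩
    have hdet : (u * !![a, b; 0, 1]).det = a := by rw [det_mul, hu, det_fin_two_of]; ring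
    simp [hdet, Matrix.mul_apply, ha]
  · intro h
    simp only [Prod.ext_iff, eq_div_iff hg] at h
    obtain ⟨h0, h1⟩ := h
    have key : u 1 0 * g 0 1 - u 0 0 * g 1 1 = -1 := by
      apply mul_right_cancel₀ hg
      rw [det_fin_two] at h0 h1 ⊢
      linear_combination g 0 1 * h1 - g 1 1 * h0
    refine ⟨g.det, u 1 1 * g 0 1 - u 0 1 * g 1 1, hg, ?_⟩
    rw [det_fin_two] at h0 h1 hu
    simp only [← Matrix.ext_iff, Fin.forall_fin_two, Matrix.mul_apply, Fin.sum_univ_two, of_apply,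
      cons_val', cons_val_zero, cons_val_one, cons_val_fin_one, det_fin_two]
    refine ⟨⟨?_, ?_⟩, ?_, ?_⟩
    · linear_combination -h0
    · linear_combination (-g 0 1) * hu - u 0 1 * key
    · linear_combination -h1
    · linear_combination (-g 1 1) * hu - u 1 1 * key

theorem mem_hurwitzUnitCoords_iff {p : ℤ_[5] × ℤ_[5] × ℤ_[5] × ℤ_[5]} :
    p ∈ hurwitzUnitCoords ↔ IsHurwitzUnitCoords p := Iff.rfl

theorem quatEmbed_eq_quatMat (ν : ℤ_[5]) (p : ℤ_[5] × ℤ_[5] × ℤ_[5] × ℤ_[5]) :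
    quatEmbed ν p = quatMat ν p := by
  simp only [← Matrix.ext_iff, Fin.forall_fin_two, quatEmbed, quatMat, one_fin_two,
    Matrix.add_apply, Matrix.smul_apply, of_apply, cons_val', cons_val_zero, cons_val_one,
    cons_val_fin_one, smul_eq_mul]
  refine ⟨⟨?_, ?_⟩, ?_, ?_⟩ <;> ring

theorem PadicInt.isUnit_two {p : ℕ} [Fact p.Prime] (hp : p ≠ 2) : IsUnit (2 : ℤ_[p]) := by
  rw [PadicInt.isUnit_iff, ← Nat.cast_ofNat, PadicInt.norm_natCast_eq_one_iff]
  exact (Nat.coprime_primes Fact.out Nat.prime_two).mpr hp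

theorem reduceMod5_quatEmbed_s3 {ν : ℤ_[5]} (hν2 : PadicInt.toZMod ν = 2)
    (p : ℤ_[5] × ℤ_[5] × ℤ_[5] × ℤ_[5]) :
    reduceMod5 (quatEmbed ν p) = quatMat 2 (mapCoords PadicInt.toZMod p) := by
  rw [reduceMod5, quatEmbed_eq_quatMat, map_quatMat, hν2]

theorem exists_hurwitzUnitCoords_reduceMod5_iff {ν : ℤ_[5]} (hν2 : PadicInt.toZMod ν = 2)
    (u : Matrix (Fin 2) (Fin 2) (ZMod 5)) :
    (∃ p ∈ hurwitzUnitCoords, u = reduceMod5 (quatEmbed ν p)) ↔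
      ∃ r, IsHurwitzUnitCoords r ∧ u = quatMat 2 r := by
  simp only [reduceMod5_quatEmbed_s3 hν2, mem_hurwitzUnitCoords_iff]
  constructor
  · rintro ⟨p, hp, rfl⟩
    exact ⟨_, hp.map _, rfl⟩
  · rintro ⟨r, hr, rfl⟩
    obtain ⟨p, hp, rfl⟩ := hr.exists_map_eq PadicInt.toZMod (PadicInt.isUnit_two (by norm_num))
    exact ⟨p, hp, rfl⟩

-- `±1/2` reduce to `3` and `2`.
def hurwitzResidues : Finset (ZMod 5 × ZMod 5 × ZMod 5 × ZMod 5) :=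
  {(1,0,0,0), (-1,0,0,0), (0,1,0,0), (0,-1,0,0), (0,0,1,0), (0,0,-1,0), (0,0,0,1), (0,0,0,-1)} ∪
    ({2, 3} ×ˢ {2, 3} ×ˢ {2, 3} ×ˢ {2, 3})

theorem isHurwitzUnitCoords_iff_mem_hurwitzResidues (r : ZMod 5 × ZMod 5 × ZMod 5 × ZMod 5) :
    IsHurwitzUnitCoords r ↔ r ∈ hurwitzResidues := by
  have half : ∀ y : ZMod 5, IsSignedHalf y ↔ y ∈ ({2, 3} : Finset (ZMod 5)) := by
    unfold IsSignedHalf; decide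
  simp only [IsHurwitzUnitCoords, signedBasis, hurwitzResidues, half, Finset.mem_union,
    Finset.mem_product, Set.mem_insert_iff, Set.mem_singleton_iff, Finset.mem_insert,
    Finset.mem_singleton]

-- The first column of `quatMat 2 r`, written out so that `decide` evaluates it quickly.
def firstCol (r : ZMod 5 × ZMod 5 × ZMod 5 × ZMod 5) : ZMod 5 × ZMod 5 :=
  (r.1 + 2 * r.2.2.1, -r.2.1 - 2 * r.2.2.2)

theorem bijOn_firstCol : Set.BijOn firstCol {r | IsHurwitzUnitCoords r} {v | v ≠ 0} := by
  rw [show {r | IsHurwitzUnitCoords r} = ↑hurwitzResidues from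
    Set.ext isHurwitzUnitCoords_iff_mem_hurwitzResidues]
  have hzero : 0 ∉ hurwitzResidues.image firstCol := by decide
  have hcard : (hurwitzResidues.image firstCol).card = hurwitzResidues.card := by decide
  have hsurj : ∀ v : ZMod 5 × ZMod 5, v ≠ 0 → ∃ r ∈ hurwitzResidues, firstCol r = v := by decide
  exact ⟨fun r hr h0 => hzero (h0 ▸ Finset.mem_image_of_mem firstCol hr),
    Finset.card_image_iff.mp hcard, hsurj⟩

theorem exists_mem_borelSet_eq_quatMat_mul_iff {g : Matrix (Fin 2) (Fin 2) (ZMod 5)}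
    (hg : g.det ≠ 0) {r : ZMod 5 × ZMod 5 × ZMod 5 × ZMod 5} (hr : IsHurwitzUnitCoords r) :
    (∃ b ∈ borelSet, g = quatMat 2 r * b) ↔ firstCol r = (g 0 0 / g.det, g 1 0 / g.det) := by
  have hdet : (quatMat 2 r).det = 1 := by
    rw [det_quatMat (by decide) r, hr.sum_sq_eq_one (isUnit_iff_ne_zero.mpr (by decide))]
  rw [show firstCol r = (quatMat 2 r 0 0, quatMat 2 r 1 0) from rfl,
    ← exists_eq_mul_upperTriangular_iff hdet hg]
  simp only [borelSet, Set.mem_ofPred_eq]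
  constructor
  · rintro ⟨_, ⟨a, b, ha, rfl⟩, hgb⟩
    exact ⟨a, b, ha, hgb⟩
  · rintro ⟨a, b, ha, hgb⟩
    exact ⟨_, ⟨a, b, ha, rfl⟩, hgb⟩

theorem hurwitz_units_coset_representatives_general
    (ν : ℤ_[5]) (hν2 : PadicInt.toZMod ν = 2) :
    ∀ g : Matrix (Fin 2) (Fin 2) (ZMod 5), IsUnit g →
      ∃! u : Matrix (Fin 2) (Fin 2) (ZMod 5),
        (∃ p ∈ hurwitzUnitCoords, u = reduceMod5 (quatEmbed ν p)) ∧
        ∃ b ∈ borelSet, g = u * b := by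
  intro g hg
  have hdet : g.det ≠ 0 := ((isUnit_iff_isUnit_det g).mp hg).ne_zero
  have hv : (g 0 0 / g.det, g 1 0 / g.det) ≠ 0 := by
    intro h
    simp only [Prod.mk_eq_zero, div_eq_zero_iff, hdet, or_false] at h
    exact hdet (by rw [det_fin_two, h.1, h.2]; ring)
  obtain ⟨r, hr, hrv⟩ := bijOn_firstCol.surjOn hv
  refine ⟨quatMat 2 r, ⟨(exists_hurwitzUnitCoords_reduceMod5_iff hν2 _).2 ⟨r, hr, rfl⟩,
    (exists_mem_borelSet_eq_quatMat_mul_iff hdet hr).2 hrv⟩, ?_⟩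
  rintro u ⟨hu, hgu⟩
  obtain ⟨s, hs, rfl⟩ := (exists_hurwitzUnitCoords_reduceMod5_iff hν2 u).1 hu
  have hsv := (exists_mem_borelSet_eq_quatMat_mul_iff hdet hs).1 hgu
  rw [bijOn_firstCol.injOn hs hr (hsv.trans hrv.symm)]

/-- The image in `GL₂(F₅)` of the Hurwitz unit group `O_D^×`, via reduction mod 5 of the
embedding determined by `ν`, forms a complete set of coset representatives for
`GL₂(F₅)/B`: every invertible matrix `g` lies in `uB` for a unique `u` in the image. -/
theorem hurwitz_units_coset_representatives
    (ν : ℤ_[5]) (hν : ν ^ 2 = -1) (hν2 : PadicInt.toZMod ν = 2) :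
    ∀ g : Matrix (Fin 2) (Fin 2) (ZMod 5), IsUnit g →
      ∃! u : Matrix (Fin 2) (Fin 2) (ZMod 5),
        (∃ p ∈ hurwitzUnitCoords, u = reduceMod5 (quatEmbed ν p)) ∧
        ∃ b ∈ borelSet, g = u * b :=
  hurwitz_units_coset_representatives_general ν hν2
end

section
/- Let α ∈ Q_5 and k ≥ 2. The coefficient a_{i,j} of x^i y^j in the formal power series expansion of ((α-1)x+α)^{k-1} / ((α-1)x + α + (α-1)xy - αy) is given by a_{i,j} = α^{k-i-2} (1-α)^i · Σ_{n=0}^{min(i,j)} (-1)^{i-n} C(j,n) C(k-j-2, i-n), where C denotes binomial coefficients (with the usual convention for C(m,r) with possibly negative m, interpreted via the generalized binomial coefficient). -/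
/-! The denominator is `P - B y` with `P = α + (α - 1) x` and `B = α + (1 - α) x`, so
`F = P ^ (k - 1) / (P - B y) = ∑ⱼ Bʲ P ^ (k - 2 - j) yʲ`. Since `α ≠ 0`, every integer power
of `a + b x` is `aᵐ (1 + (b / a) x)ᵐ`, a rescaled binomial series, and the coefficient of `xⁱ`
in `Bʲ P ^ (k - 2 - j)` is a Cauchy product of two such series. -/

open PowerSeries

/-- The generalized binomial coefficient `C(m, r) = m(m-1)⋯(m-r+1)/r!` for an integer `m`
(possibly negative), with values in `ℚ₅`. -/
noncomputable def gbinom (m : ℤ) (r : ℕ) : ℚ_[5] :=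
  (∏ t ∈ Finset.range r, ((m : ℚ_[5]) - (t : ℚ_[5]))) / (r.factorial : ℚ_[5])

lemma gbinom_eq_choose (m : ℤ) (r : ℕ) : gbinom m r = ((Ring.choose m r : ℤ) : ℚ_[5]) := by
  rw [← eq_intCast (Int.castRingHom ℚ_[5]), Ring.map_choose, eq_intCast, Ring.choose_eq_smul,
    ← Polynomial.aeval_eq_smeval, Polynomial.aeval_def, Polynomial.eval₂_eq_eval_map,
    descPochhammer_map, descPochhammer_eval_eq_prod_range, smul_eq_mul, gbinom, div_eq_inv_mul]

namespace PowerSeries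

theorem C_sub_C_mul_X_mul_mk {S : Type*} [CommRing S] {p q : S} {g : ℕ → S}
    (hg : ∀ j, p * g (j + 1) = q * g j) : (C p - C q * X) * mk g = C (p * g 0) := by
  ext (_ | j)
  · simp
  · simp [sub_mul, mul_assoc, hg]

section BinomialZPow

variable {K : Type*} [Field K]

/-- `(a + b X) ^ m` for an integer exponent `m`; meaningful only when `a ≠ 0`. -/
noncomputable def binomialZPow (a b : K) (m : ℤ) : K⟦X⟧ :=
  C (a ^ m) * rescale (b / a) (binomialSeries K m)

variable {a : K} (b : K)

@[simp]
theorem binomialZPow_zero : binomialZPow a b 0 = 1 := by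
  simp [binomialZPow]

variable (ha : a ≠ 0)
include ha

theorem binomialZPow_add (m n : ℤ) :
    binomialZPow a b (m + n) = binomialZPow a b m * binomialZPow a b n := by
  simp only [binomialZPow, binomialSeries_add, map_mul, zpow_add₀ ha]
  ring

theorem binomialZPow_one : binomialZPow a b 1 = C a + C b * X := by
  have := binomialSeries_nat (R := ℤ) (A := K) 1
  simp only [Nat.cast_one, pow_one] at this
  rw [binomialZPow, this, map_add, map_one, rescale_X, zpow_one, mul_add, mul_one, ← mul_assoc,
    ← map_mul, mul_div_cancel₀ b ha]

theorem binomialZPow_natCast (n : ℕ) : binomialZPow a b n = (C a + C b * X) ^ n := by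
  induction n with
  | zero => simp
  | succ n ih => rw [Nat.cast_succ, binomialZPow_add b ha, ih, binomialZPow_one b ha, pow_succ]

theorem coeff_binomialZPow (m : ℤ) (r : ℕ) :
    coeff r (binomialZPow a b m) = ((Ring.choose m r : ℤ) : K) * b ^ r * a ^ (m - r) := by
  rw [binomialZPow, coeff_C_mul, coeff_rescale, binomialSeries_coeff, zsmul_one, div_pow,
    zpow_sub₀ ha, zpow_natCast]
  field_simp

theorem coeff_binomialZPow_mul_binomialZPow_neg (s t : ℤ) (i : ℕ) :
    coeff i (binomialZPow a b s * binomialZPow a (-b) t) =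
      a ^ (s + t - i) * b ^ i *
        ∑ n ∈ Finset.range (i + 1),
          (-1) ^ (i - n) * ((Ring.choose s n : ℤ) : K) * ((Ring.choose t (i - n) : ℤ) : K) := by
  rw [coeff_mul, Finset.Nat.sum_antidiagonal_eq_sum_range_succ_mk, Finset.mul_sum]
  refine Finset.sum_congr rfl fun n hn => ?_
  have hni : n ≤ i := Nat.lt_succ_iff.mp (Finset.mem_range.mp hn)
  have hb : b ^ n * b ^ (i - n) = b ^ i := by rw [← pow_add, Nat.add_sub_cancel' hni]
  have ha' : a ^ (s - n) * a ^ (t - (i - n : ℕ)) = a ^ (s + t - i) := by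
    rw [← zpow_add₀ ha, Nat.cast_sub hni]; ring_nf
  simp only [coeff_binomialZPow b ha, coeff_binomialZPow (-b) ha, neg_pow b, ← hb, ← ha']
  ring

theorem C_sub_C_mul_X_mul_mk_binomialZPow (c : K) (m : ℤ) :
    (C (binomialZPow a b 1) - C (binomialZPow a c 1) * X) *
        mk (fun j => binomialZPow a c j * binomialZPow a b (m - j)) =
      C (binomialZPow a b (m + 1)) := by
  rw [C_sub_C_mul_X_mul_mk, Nat.cast_zero, binomialZPow_zero, one_mul, sub_zero,
    ← binomialZPow_add b ha, add_comm]
  intro j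
  rw [show m - j = 1 + (m - (j + 1 : ℕ)) by push_cast; ring, Nat.cast_succ,
    binomialZPow_add b ha, binomialZPow_add c ha]
  ring

end BinomialZPow

end PowerSeries

/-- For `α ≠ 0` and `k ≥ 2`, the coefficient `a_{i,j}` of `x^i y^j` in the expansion of
`((α-1)x+α)^{k-1} / ((α-1)x + α + (α-1)xy - αy)` (formulated via the defining relation
`((α-1)x + α + (α-1)xy - αy) · F = ((α-1)x+α)^{k-1}`) is
`α^{k-i-2} (1-α)^i Σ_{n=0}^{min(i,j)} (-1)^{i-n} C(j,n) C(k-j-2, i-n)`. -/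
theorem coeff_H_delta2 (α : ℚ_[5]) (hα : α ≠ 0) (k : ℕ) (hk : 2 ≤ k)
    (F : PowerSeries (PowerSeries ℚ_[5]))
    (hF : (PowerSeries.C (R := PowerSeries ℚ_[5])
          (PowerSeries.C (R := ℚ_[5]) (α - 1) * PowerSeries.X + PowerSeries.C (R := ℚ_[5]) α) +
        PowerSeries.C (R := PowerSeries ℚ_[5])
          (PowerSeries.C (R := ℚ_[5]) (α - 1) * PowerSeries.X - PowerSeries.C (R := ℚ_[5]) α) *
          PowerSeries.X) * F =
      PowerSeries.C (R := PowerSeries ℚ_[5])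
        ((PowerSeries.C (R := ℚ_[5]) (α - 1) * PowerSeries.X + PowerSeries.C (R := ℚ_[5]) α) ^ (k - 1))) :
    ∀ i j : ℕ,
      PowerSeries.coeff (R := ℚ_[5]) i (PowerSeries.coeff (R := PowerSeries ℚ_[5]) j F) =
        α ^ ((k : ℤ) - i - 2) * (1 - α) ^ i *
          ∑ n ∈ Finset.range (min i j + 1),
            (-1 : ℚ_[5]) ^ (i - n) * (j.choose n : ℚ_[5]) * gbinom ((k : ℤ) - j - 2) (i - n) := by
  have hgen := C_sub_C_mul_X_mul_mk_binomialZPow (α - 1) hα (1 - α) (k - 2)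
  rw [show (k : ℤ) - 2 + 1 = (k - 1 : ℕ) by omega, binomialZPow_natCast _ hα,
    binomialZPow_one _ hα, binomialZPow_one _ hα] at hgen
  have hM : C (C α + C (α - 1) * X) - C (C α + C (1 - α) * X) * X ≠ 0 := fun h => by
    simpa [hα] using congrArg (coeff 0 ∘ constantCoeff) h
  have hF_eq : F = mk fun j => binomialZPow α (1 - α) j * binomialZPow α (α - 1) (k - 2 - j) := by
    refine mul_left_cancel₀ hM ?_
    rw [hgen, add_comm (C α), ← hF]
    simp only [map_add, map_sub, map_mul, map_one]
    ring
  intro i j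
  rw [hF_eq, coeff_mk, ← neg_sub 1 α, coeff_binomialZPow_mul_binomialZPow_neg _ hα,
    show (j : ℤ) + (k - 2 - j) - i = k - i - 2 by ring]
  simp only [gbinom_eq_choose, Ring.choose_natCast, Int.cast_natCast, sub_right_comm _ (2 : ℤ)]
  congr 1
  refine (Finset.sum_subset (Finset.range_subset_range.2 (Nat.succ_le_succ (min_le_left i j)))
    fun n hn hnj => ?_).symm
  rw [Finset.mem_range] at hn hnj
  simp [Nat.choose_eq_zero_of_lt (by omega : j < n)]
end
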